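/- Global error bound for the SI process (Theorem 2A): suppose k ≥ 3, 0 < h ≤ 1, and A₁, A₂, … are i.i.d. random edge-timer vectors, each a vector of independent exponential rate-1 random variables indexed by the edges of G. Let X₀ = X̃₀ = x₀ for an arbitrary initial state x₀, Xᵢ = g(Xᵢ₋₁, Aᵢ) and X̃ᵢ = g̃(X̃ᵢ₋₁, Aᵢ). Then for every i ≥ 0, E[‖Xᵢ − X̃ᵢ‖₁] ≤ C_SI · K_SI · h, where C_SI = n·k²·e^{k−2}, K_SI = (e^{kT} − 1)/k, and T = i·h. -/

import Mathlib

open MeasureTheory ProbabilityTheory Real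

/-- View a Boolean infection state as a real number (`true ↦ 1`, `false ↦ 0`). -/
def boolToR (b : Bool) : ℝ := if b then 1 else 0

open Classical in
/-- One step of the SI discrete-time simulation (DTS): node `j` is infected afterwards iff
it was infected, or some infected neighbor's edge timer fires within time `h`. -/
noncomputable def siDTS {V : Type*} (G : SimpleGraph V) (h : ℝ) (x : V → Bool)
    (a : G.edgeSet → ℝ) : V → Bool := fun j =>
  if x j = true ∨ ∃ j', ∃ hadj : G.Adj j j',
      x j' = true ∧ a ⟨s(j, j'), (SimpleGraph.mem_edgeSet G).mpr hadj⟩ ≤ h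
  then true else false

open Classical in
/-- State at time `h` of the SI discrete-event simulation (DES) started at `x` with edge
timers `a`, via the first-passage-percolation description: node `j` is infected iff it was
infected, or there is a path from an infected node to `j` whose timers sum to at most `h`. -/
noncomputable def siDES {V : Type*} (G : SimpleGraph V) (h : ℝ) (x : V → Bool)
    (a : G.edgeSet → ℝ) : V → Bool := fun j =>
  if x j = true ∨ ∃ j₀, ∃ p : G.Walk j₀ j, x j₀ = true ∧
      (p.edges.attach.map fun e => a ⟨e.1, p.edges_subset_edgeSet e.2⟩).sum ≤ h
  then true else false

/-!
Run both schemes on the same timers. By induction the DTS state never exceeds the DES state,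
so the ℓ¹ error is the expected number of nodes infected by DES but not by DTS. After one step
such a node `j` either disagreed already, or a neighbour that disagreed reaches `j` through a
single timer `≤ h`, or two consecutive timers `≤ h` lie on a path `j – j' – j''` with `j'' ≠ j`
(every DES infection path of length at least two into `j` contains such a pair). The timers of
a step are independent of the past and of each other, and `P(A ≤ h) = 1 - e^{-h} ≤ h`, so the
expected disagreement `dᵢ` satisfies `dᵢ₊₁ ≤ n k² h² + (1 + k h) dᵢ`. The discrete Gronwall
inequality gives `dᵢ ≤ n k h (e^{k i h} - 1)`, which is at most the claimed bound as `e^{k-2} ≥ 1`.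
-/

instance SimpleGraph.Walk.instCountable {V : Type*} [Countable V] (G : SimpleGraph V) (u v : V) :
    Countable (G.Walk u v) :=
  SimpleGraph.Walk.support_injective.countable

theorem SimpleGraph.Walk.IsPath.edge_mem_or_two_edges_mem {V : Type*} {G : SimpleGraph V}
    {v u : V} {q : G.Walk v u} (hq : q.IsPath) (hvu : v ≠ u) :
    s(v, u) ∈ q.edges ∨ ∃ w w', w' ≠ v ∧ s(v, w) ∈ q.edges ∧ s(w, w') ∈ q.edges := by
  match q, hq with
  | .nil, _ => exact absurd rfl hvu
  | .cons _ .nil, _ => exact .inl (by simp)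
  | .cons (v := w) _ (.cons (v := w') _ q''), hq =>
    refine .inr ⟨w, w', ?_, by simp, by simp⟩
    rintro rfl
    have := hq.support_nodup
    simp_all

theorem SimpleGraph.sum_sum_neighborFinset_le {V : Type*} [Fintype V] {G : SimpleGraph V}
    [G.LocallyFinite] {k : ℕ} (hdeg : ∀ j, G.degree j ≤ k) {f : V → ℝ} (hf : 0 ≤ f) :
    ∑ j, ∑ j' ∈ G.neighborFinset j, f j' ≤ k * ∑ j, f j := by
  rw [Finset.sum_comm' (t' := Finset.univ) (s' := fun j => G.neighborFinset j)
    fun _ _ => by simp [G.adj_comm], Finset.mul_sum]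
  refine Finset.sum_le_sum fun j _ => ?_
  rw [Finset.sum_const, nsmul_eq_mul, SimpleGraph.card_neighborFinset_eq_degree]
  exact mul_le_mul_of_nonneg_right (by exact_mod_cast hdeg j) (hf j)

theorem discrete_gronwall_exp_sub_one {d : ℕ → ℝ} {c r : ℝ} (hc : 0 ≤ c) (hr : 0 ≤ r)
    (hd0 : d 0 = 0) (hd : ∀ i, d (i + 1) ≤ c + (1 + r) * d i) :
    ∀ i : ℕ, d i * r ≤ c * (exp (r * i) - 1)
  | 0 => by simp [hd0]
  | i + 1 => by
    have ih := discrete_gronwall_exp_sub_one hc hr hd0 hd i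
    have hexp : (1 + r) * exp (r * i) ≤ exp (r * ↑(i + 1)) := by
      rw [Nat.cast_succ, mul_add_one, exp_add, mul_comm]
      gcongr
      linarith [add_one_le_exp r]
    calc d (i + 1) * r ≤ (c + (1 + r) * d i) * r := mul_le_mul_of_nonneg_right (hd i) hr
      _ = c * r + (1 + r) * (d i * r) := by ring
      _ ≤ c * r + (1 + r) * (c * (exp (r * i) - 1)) := by gcongr
      _ = c * ((1 + r) * exp (r * i) - 1) := by ring
      _ ≤ c * (exp (r * ↑(i + 1)) - 1) := by gcongr

namespace SIProcess

variable {Ω V : Type*} {G : SimpleGraph V} {h : ℝ}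

section Deterministic

variable (G h)

def TimerFires (a : G.edgeSet → ℝ) (u v : V) : Prop :=
  ∃ huv : G.Adj u v, a ⟨s(u, v), (SimpleGraph.mem_edgeSet G).mpr huv⟩ ≤ h

def TwoStepFires (a : G.edgeSet → ℝ) (j : V) : Prop :=
  ∃ j' j'', j'' ≠ j ∧ TimerFires G h a j j' ∧ TimerFires G h a j' j''

variable {G h}

def walkWeight (a : G.edgeSet → ℝ) {u v : V} (p : G.Walk u v) : ℝ :=
  (p.edges.attach.map fun e => a ⟨e.1, p.edges_subset_edgeSet e.2⟩).sum

lemma siDTS_eq_true_iff {x : V → Bool} {a : G.edgeSet → ℝ} {j : V} :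
    siDTS G h x a j = true ↔ x j = true ∨ ∃ j', x j' = true ∧ TimerFires G h a j j' := by
  simp [siDTS, TimerFires]

lemma siDES_eq_true_iff {x : V → Bool} {a : G.edgeSet → ℝ} {j : V} :
    siDES G h x a j = true ↔
      x j = true ∨ ∃ j₀, ∃ p : G.Walk j₀ j, x j₀ = true ∧ walkWeight a p ≤ h := by
  simp [siDES, walkWeight]

lemma siDTS_mono_left (a : G.edgeSet → ℝ) : Monotone fun x => siDTS G h x a := by
  intro x y hxy j
  simp only [Bool.le_iff_imp, siDTS_eq_true_iff]
  rintro (hj | ⟨j', hj', hfire⟩)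
  · exact .inl (Bool.le_iff_imp.mp (hxy j) hj)
  · exact .inr ⟨j', Bool.le_iff_imp.mp (hxy j') hj', hfire⟩

lemma siDTS_le_siDES (x : V → Bool) (a : G.edgeSet → ℝ) : siDTS G h x a ≤ siDES G h x a := by
  intro j
  simp only [Bool.le_iff_imp, siDTS_eq_true_iff, siDES_eq_true_iff]
  rintro (hj | ⟨j', hj', huv, hle⟩)
  · exact .inl hj
  · refine .inr ⟨j', .cons huv.symm .nil, hj', ?_⟩
    simpa [walkWeight, Sym2.eq_swap] using hle

lemma siDTS_orbit_le_siDES_orbit {x y : ℕ → V → Bool} {a : ℕ → G.edgeSet → ℝ} (h0 : x 0 = y 0)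
    (hx : ∀ i, x (i + 1) = siDTS G h (x i) (a (i + 1)))
    (hy : ∀ i, y (i + 1) = siDES G h (y i) (a (i + 1))) : ∀ i, x i ≤ y i
  | 0 => h0.le
  | i + 1 => by
    rw [hx, hy]
    exact (siDTS_mono_left _ (siDTS_orbit_le_siDES_orbit h0 hx hy i)).trans (siDTS_le_siDES _ _)

lemma timerFires_of_mem_edges {a : G.edgeSet → ℝ} (ha : 0 ≤ a) {u v w w' : V} {p : G.Walk u v}
    (hp : walkWeight a p ≤ h) (he : s(w, w') ∈ p.edges) : TimerFires G h a w w' := by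
  refine ⟨p.adj_of_mem_edges he, le_trans ?_ hp⟩
  refine List.single_le_sum (fun t ht => ?_) _ ?_
  · obtain ⟨e, -, rfl⟩ := List.mem_map.mp ht
    exact ha _
  · exact List.mem_map.mpr ⟨⟨_, he⟩, List.mem_attach _ _, rfl⟩

lemma exists_of_siDTS_ne_siDES {x y : V → Bool} (hxy : x ≤ y) {a : G.edgeSet → ℝ} (ha : 0 ≤ a)
    {j : V} (hne : siDTS G h x a j ≠ siDES G h y a j) :
    TwoStepFires G h a j ∨ x j ≠ y j ∨ ∃ j', x j' ≠ y j' ∧ TimerFires G h a j j' := by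
  classical
  have hle : siDTS G h x a j ≤ siDES G h y a j :=
    (siDTS_mono_left a hxy).trans (siDTS_le_siDES y a) j
  obtain ⟨hDTS, hDES⟩ : siDTS G h x a j = false ∧ siDES G h y a j = true := by
    revert hne hle; cases siDTS G h x a j <;> cases siDES G h y a j <;> decide
  simp only [← Bool.not_eq_true, siDTS_eq_true_iff, not_or, not_exists, not_and] at hDTS
  by_cases hj : x j = y j
  swap
  · exact .inr (.inl hj)
  obtain hyj | ⟨j₀, p, hy₀, hp⟩ := siDES_eq_true_iff.mp hDES
  · exact absurd (hj ▸ hyj) hDTS.1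
  have hj₀ : j ≠ j₀ := by rintro rfl; exact hDTS.1 (hj ▸ hy₀)
  have hsub : p.reverse.bypass.edges ⊆ p.edges := fun e he => by
    simpa using p.reverse.edges_bypass_subset_edges he
  rcases p.reverse.bypass_isPath.edge_mem_or_two_edges_mem hj₀ with he | ⟨w, w', hw', he, he'⟩
  · have hfire := timerFires_of_mem_edges ha hp (hsub he)
    exact .inr (.inr ⟨j₀, fun hx₀ => hDTS.2 j₀ (hx₀ ▸ hy₀) hfire, hfire⟩)
  · exact .inl ⟨w, w', hw', timerFires_of_mem_edges ha hp (hsub he),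
      timerFires_of_mem_edges ha hp (hsub he')⟩

end Deterministic

section Measurability

lemma measurableSet_timerFires (u v : V) :
    MeasurableSet {a : G.edgeSet → ℝ | TimerFires G h a u v} := by
  simp only [TimerFires, Set.ofPred_exists]
  exact .iUnion fun _ => measurableSet_le (measurable_pi_apply _) measurable_const

lemma measurable_walkWeight {u v : V} (p : G.Walk u v) :
    Measurable fun a : G.edgeSet → ℝ => walkWeight a p := by
  simpa [walkWeight, List.map_map, Function.comp_def] using List.measurable_fun_sum
    (p.edges.attach.map fun e (a : G.edgeSet → ℝ) => a ⟨e.1, p.edges_subset_edgeSet e.2⟩)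
    (by simp only [List.mem_map]; rintro _ ⟨e, -, rfl⟩; exact measurable_pi_apply _)

lemma measurable_siDTS [Countable V] : Measurable (Function.uncurry (siDTS G h)) := by
  refine measurable_pi_iff.mpr fun j => measurable_to_bool ?_
  have : (fun p => Function.uncurry (siDTS G h) p j) ⁻¹' {true} =
      {p : (V → Bool) × (G.edgeSet → ℝ) | p.1 j = true} ∪
        ⋃ j', {p | p.1 j' = true} ∩ Prod.snd ⁻¹' {a | TimerFires G h a j j'} := by
    ext ⟨x, a⟩; simp [siDTS_eq_true_iff]
  rw [this]
  refine .union ?_ (.iUnion fun j' => .inter ?_ (measurable_snd (measurableSet_timerFires j j')))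
  · exact measurableSet_eq_fun (by fun_prop) measurable_const
  · exact measurableSet_eq_fun (by fun_prop) measurable_const

lemma measurable_siDES [Countable V] : Measurable (Function.uncurry (siDES G h)) := by
  refine measurable_pi_iff.mpr fun j => measurable_to_bool ?_
  have : (fun p => Function.uncurry (siDES G h) p j) ⁻¹' {true} =
      {p : (V → Bool) × (G.edgeSet → ℝ) | p.1 j = true} ∪ ⋃ j₀, ⋃ p : G.Walk j₀ j,
        {q | q.1 j₀ = true} ∩ Prod.snd ⁻¹' {a | walkWeight a p ≤ h} := by
    ext ⟨x, a⟩; simp [siDES_eq_true_iff]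
  rw [this]
  refine .union ?_ (.iUnion fun j₀ => .iUnion fun p => .inter ?_ (measurable_snd ?_))
  · exact measurableSet_eq_fun (by fun_prop) measurable_const
  · exact measurableSet_eq_fun (by fun_prop) measurable_const
  · exact measurableSet_le (measurable_walkWeight p) measurable_const

variable {A : ℕ → Ω → G.edgeSet → ℝ}

/-- The index `(m, e)` stands for the timer `A (m + 1) e` of edge `e` at step `m + 1`, so that
`pastTimers A i` is generated by the timers of the first `i` steps. -/
abbrev timerSigma (A : ℕ → Ω → G.edgeSet → ℝ) (S : Set (ℕ × G.edgeSet)) : MeasurableSpace Ω :=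
  ⨆ p ∈ S, MeasurableSpace.comap (fun ω => A (p.1 + 1) ω p.2) inferInstance

abbrev pastTimers (A : ℕ → Ω → G.edgeSet → ℝ) (i : ℕ) : MeasurableSpace Ω :=
  timerSigma A {p | p.1 < i}

lemma timerSigma_mono {S T : Set (ℕ × G.edgeSet)} (hST : S ⊆ T) :
    timerSigma A S ≤ timerSigma A T :=
  biSup_mono hST

lemma measurable_timerSigma {S : Set (ℕ × G.edgeSet)} {p : ℕ × G.edgeSet} (hp : p ∈ S) :
    Measurable[timerSigma A S] fun ω => A (p.1 + 1) ω p.2 :=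
  Measurable.of_comap_le (le_iSup₂_of_le p hp le_rfl)

lemma measurableSet_timerFires_timerSigma {S : Set (ℕ × G.edgeSet)} {i : ℕ} {u v : V}
    (hS : ∀ huv : G.Adj u v, (i, ⟨s(u, v), (SimpleGraph.mem_edgeSet G).mpr huv⟩) ∈ S) :
    MeasurableSet[timerSigma A S] {ω | TimerFires G h (A (i + 1) ω) u v} := by
  simp only [TimerFires, Set.ofPred_exists]
  exact .iUnion fun huv => measurable_timerSigma (hS huv) measurableSet_Iic

lemma measurable_pastTimers_succ (i : ℕ) : Measurable[pastTimers A (i + 1)] (A (i + 1)) :=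
  @measurable_pi_lambda _ _ _ (pastTimers A (i + 1)) _ _ fun e =>
    measurable_timerSigma (p := (i, e)) (Nat.lt_succ_self i)

lemma measurable_pastTimers_of_recursion {S : Type*} [MeasurableSpace S]
    {F : S → (G.edgeSet → ℝ) → S} (hF : Measurable (Function.uncurry F)) {X : ℕ → Ω → S}
    {x₀ : S} (hX0 : ∀ ω, X 0 ω = x₀) (hX : ∀ i ω, X (i + 1) ω = F (X i ω) (A (i + 1) ω)) :
    ∀ i, Measurable[pastTimers A i] (X i)
  | 0 => by simp only [funext hX0]; exact measurable_const
  | i + 1 => by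
    have hXi := (measurable_pastTimers_of_recursion hF hX0 hX i).mono
      (timerSigma_mono fun p (hp : p.1 < i) => Nat.lt_succ_of_lt hp) le_rfl
    rw [show X (i + 1) = _ from funext (hX i)]
    exact hF.comp (hXi.prodMk (measurable_pastTimers_succ i))

end Measurability

structure IsExpTimers [MeasurableSpace Ω] (A : ℕ → Ω → G.edgeSet → ℝ) (μ : Measure Ω) :
    Prop where
  measurable : ∀ i : ℕ, ∀ e : G.edgeSet, Measurable fun ω => A (i + 1) ω e
  indep : iIndepFun (fun (p : ℕ × G.edgeSet) ω => A (p.1 + 1) ω p.2) μ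
  map_eq : ∀ i : ℕ, ∀ e : G.edgeSet, Measure.map (fun ω => A (i + 1) ω e) μ = expMeasure 1

namespace IsExpTimers

variable [MeasurableSpace Ω] {μ : Measure Ω} {A : ℕ → Ω → G.edgeSet → ℝ}

lemma timerSigma_le (hA : IsExpTimers A μ) (S : Set (ℕ × G.edgeSet)) :
    timerSigma A S ≤ ‹MeasurableSpace Ω› :=
  iSup₂_le fun p _ => (hA.measurable p.1 p.2).comap_le

lemma indep_timerSigma (hA : IsExpTimers A μ) {S T : Set (ℕ × G.edgeSet)} (hST : Disjoint S T) :
    Indep (timerSigma A S) (timerSigma A T) μ := by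
  have := indep_iSup_of_disjoint (fun p => (hA.measurable p.1 p.2).comap_le) hA.indep.iIndep hST
  exact this

lemma ae_nonneg [Countable V] (hA : IsExpTimers A μ) (i : ℕ) : ∀ᵐ ω ∂μ, 0 ≤ A (i + 1) ω := by
  simp only [Pi.le_def, Pi.zero_apply]
  refine ae_all_iff.mpr fun e => ?_
  have hnull : μ ((fun ω => A (i + 1) ω e) ⁻¹' Set.Iio 0) = 0 := by
    rw [← Measure.map_apply (hA.measurable i e) measurableSet_Iio, hA.map_eq i e, expMeasure,
      gammaMeasure, withDensity_apply _ measurableSet_Iio]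
    exact lintegral_exponentialPDF_of_nonpos le_rfl
  simpa [ae_iff, not_le, Set.preimage] using hnull

lemma measureReal_timerFires_le (hA : IsExpTimers A μ) (h0 : 0 ≤ h) (i : ℕ) (u v : V) :
    μ.real {ω | TimerFires G h (A (i + 1) ω) u v} ≤ h := by
  by_cases huv : G.Adj u v
  · have hset : {ω | TimerFires G h (A (i + 1) ω) u v} =
        (fun ω => A (i + 1) ω ⟨s(u, v), (SimpleGraph.mem_edgeSet G).mpr huv⟩) ⁻¹' Set.Iic h := by
      ext; simp [TimerFires, huv]
    have : IsProbabilityMeasure (expMeasure 1) := isProbabilityMeasure_expMeasure one_pos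
    rw [hset, ← map_measureReal_apply (hA.measurable i _) measurableSet_Iic, hA.map_eq,
      ← cdf_eq_real, cdf_expMeasure_eq one_pos, if_pos h0, one_mul]
    linarith [add_one_le_exp (-h)]
  · have hset : {ω | TimerFires G h (A (i + 1) ω) u v} = ∅ := by ext; simp [TimerFires, huv]
    simpa [hset] using h0

lemma measureReal_inter_timerFires_le (hA : IsExpTimers A μ) (h0 : 0 ≤ h)
    {S : Set (ℕ × G.edgeSet)} {E : Set Ω} (hE : MeasurableSet[timerSigma A S] E) {i : ℕ}
    {u v : V} (hS : ∀ huv : G.Adj u v, (i, ⟨s(u, v), (SimpleGraph.mem_edgeSet G).mpr huv⟩) ∉ S) :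
    μ.real (E ∩ {ω | TimerFires G h (A (i + 1) ω) u v}) ≤ μ.real E * h := by
  have hdisj : Disjoint S {p | p.1 = i ∧ p.2.1 = s(u, v)} := by
    refine Set.disjoint_left.mpr fun ⟨m, e, he⟩ hp ⟨hm, hmem⟩ => ?_
    simp only at hm hmem
    subst hm hmem
    exact hS ((SimpleGraph.mem_edgeSet G).mp he) hp
  have hF := measurableSet_timerFires_timerSigma (h := h) (A := A)
    (S := {p | p.1 = i ∧ p.2.1 = s(u, v)}) fun _ => ⟨rfl, rfl⟩
  have hmul := (Indep_iff _ _ _).mp (hA.indep_timerSigma hdisj) _ _ hE hF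
  rw [measureReal_def, hmul, ENNReal.toReal_mul, ← measureReal_def, ← measureReal_def]
  exact mul_le_mul_of_nonneg_left (hA.measureReal_timerFires_le h0 i u v) measureReal_nonneg

lemma measureReal_timerFires_inter_timerFires_le (hA : IsExpTimers A μ) (h0 : 0 ≤ h) {i : ℕ}
    {j j' j'' : V} (hj' : G.Adj j j') (hj'' : j'' ≠ j) :
    μ.real ({ω | TimerFires G h (A (i + 1) ω) j j'} ∩ {ω | TimerFires G h (A (i + 1) ω) j' j''}) ≤
      h ^ 2 := by
  have hE := measurableSet_timerFires_timerSigma (h := h) (A := A)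
    (S := {p | p.1 = i ∧ p.2.1 = s(j, j')}) fun _ => ⟨rfl, rfl⟩
  -- the two timers sit on distinct edges (`j'' ≠ j` and `j' ≠ j`), hence are independent
  have hS : ∀ huv : G.Adj j' j'',
      ((i, ⟨s(j', j''), (SimpleGraph.mem_edgeSet G).mpr huv⟩) : ℕ × G.edgeSet) ∉
        {p : ℕ × G.edgeSet | p.1 = i ∧ p.2.1 = s(j, j')} :=
    fun _ hmem => hj'' ((Sym2.eq_iff.mp hmem.2).resolve_left fun heq => hj'.ne' heq.1).2
  calc _ ≤ μ.real {ω | TimerFires G h (A (i + 1) ω) j j'} * h :=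
        hA.measureReal_inter_timerFires_le h0 hE hS
    _ ≤ h * h := by gcongr; exact hA.measureReal_timerFires_le h0 i j j'
    _ = h ^ 2 := (sq h).symm

lemma measureReal_twoStepFires_le [IsFiniteMeasure μ] [G.LocallyFinite] (hA : IsExpTimers A μ)
    (h0 : 0 ≤ h) {k : ℕ} (hdeg : ∀ j, G.degree j ≤ k) (i : ℕ) (j : V) :
    μ.real {ω | TwoStepFires G h (A (i + 1) ω) j} ≤ k ^ 2 * h ^ 2 := by
  classical
  have hsub : {ω | TwoStepFires G h (A (i + 1) ω) j} ⊆
      ⋃ j' ∈ G.neighborFinset j, ⋃ j'' ∈ (G.neighborFinset j').erase j,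
        {ω | TimerFires G h (A (i + 1) ω) j j'} ∩ {ω | TimerFires G h (A (i + 1) ω) j' j''} := by
    rintro ω ⟨j', j'', hj'', hfire, hfire'⟩
    simp only [Set.mem_iUnion, Finset.mem_erase, SimpleGraph.mem_neighborFinset]
    exact ⟨j', hfire.1, j'', ⟨hj'', hfire'.1⟩, hfire, hfire'⟩
  calc μ.real {ω | TwoStepFires G h (A (i + 1) ω) j}
      ≤ ∑ j' ∈ G.neighborFinset j, ∑ j'' ∈ (G.neighborFinset j').erase j, h ^ 2 :=
        (measureReal_mono hsub (measure_ne_top _ _)).trans <|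
          (measureReal_biUnion_finset_le _ _).trans <|
          Finset.sum_le_sum fun j' hj' => (measureReal_biUnion_finset_le _ _).trans <|
          Finset.sum_le_sum fun j'' hj'' => hA.measureReal_timerFires_inter_timerFires_le h0
            ((G.mem_neighborFinset j j').mp hj') (Finset.ne_of_mem_erase hj'')
    _ ≤ ∑ j' ∈ G.neighborFinset j, k * h ^ 2 := Finset.sum_le_sum fun j' _ => by
        rw [Finset.sum_const, nsmul_eq_mul]
        gcongr
        exact_mod_cast (Finset.card_erase_le).trans (hdeg j')
    _ ≤ k * (k * h ^ 2) := by
        rw [Finset.sum_const, nsmul_eq_mul, SimpleGraph.card_neighborFinset_eq_degree]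
        gcongr
        exact_mod_cast hdeg j
    _ = k ^ 2 * h ^ 2 := by ring

lemma measureReal_siDTS_ne_siDES_le [Countable V] [IsFiniteMeasure μ] [G.LocallyFinite]
    (hA : IsExpTimers A μ) (h0 : 0 ≤ h) {i : ℕ} {x y : Ω → V → Bool}
    (hx : Measurable[pastTimers A i] x) (hy : Measurable[pastTimers A i] y)
    (hxy : ∀ ω, x ω ≤ y ω) (j : V) :
    μ.real {ω | siDTS G h (x ω) (A (i + 1) ω) j ≠ siDES G h (y ω) (A (i + 1) ω) j} ≤
      μ.real {ω | TwoStepFires G h (A (i + 1) ω) j} + μ.real {ω | x ω j ≠ y ω j} +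
        h * ∑ j' ∈ G.neighborFinset j, μ.real {ω | x ω j' ≠ y ω j'} := by
  have hsub : {ω | siDTS G h (x ω) (A (i + 1) ω) j ≠ siDES G h (y ω) (A (i + 1) ω) j} ≤ᵐ[μ]
      (({ω | TwoStepFires G h (A (i + 1) ω) j} ∪ {ω | x ω j ≠ y ω j}) ∪
        ⋃ j' ∈ G.neighborFinset j, {ω | x ω j' ≠ y ω j'} ∩ {ω | TimerFires G h (A (i + 1) ω) j j'} :
          Set Ω) := by
    filter_upwards [hA.ae_nonneg i] with ω hω hne
    rcases exists_of_siDTS_ne_siDES (hxy ω) hω hne with htwo | hj | ⟨j', hj', hfire⟩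
    · exact .inl (.inl htwo)
    · exact .inl (.inr hj)
    · exact .inr (Set.mem_biUnion ((G.mem_neighborFinset _ _).mpr hfire.1) ⟨hj', hfire⟩)
  have hmeas : ∀ j', MeasurableSet[pastTimers A i] {ω | x ω j' ≠ y ω j'} := fun j' =>
    (measurableSet_eq_fun ((measurable_pi_apply j').comp hx)
      ((measurable_pi_apply j').comp hy)).compl
  calc _ ≤ _ := ENNReal.toReal_mono (measure_ne_top _ _) (measure_mono_ae hsub)
    _ ≤ μ.real {ω | TwoStepFires G h (A (i + 1) ω) j} + μ.real {ω | x ω j ≠ y ω j} +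
        ∑ j' ∈ G.neighborFinset j,
          μ.real ({ω | x ω j' ≠ y ω j'} ∩ {ω | TimerFires G h (A (i + 1) ω) j j'}) :=
      (measureReal_union_le _ _).trans
        (add_le_add (measureReal_union_le _ _) (measureReal_biUnion_finset_le _ _))
    _ ≤ μ.real {ω | TwoStepFires G h (A (i + 1) ω) j} + μ.real {ω | x ω j ≠ y ω j} +
        ∑ j' ∈ G.neighborFinset j, μ.real {ω | x ω j' ≠ y ω j'} * h := by
      gcongr with j' _
      exact hA.measureReal_inter_timerFires_le h0 (hmeas j') fun _ hp => lt_irrefl i hp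
    _ = _ := by rw [Finset.mul_sum]; simp only [mul_comm h]

lemma sum_measureReal_siDTS_ne_siDES_le [Fintype V] [IsFiniteMeasure μ] [G.LocallyFinite]
    (hA : IsExpTimers A μ) (h0 : 0 ≤ h) {k : ℕ} (hdeg : ∀ j, G.degree j ≤ k) {i : ℕ}
    {x y : Ω → V → Bool} (hx : Measurable[pastTimers A i] x) (hy : Measurable[pastTimers A i] y)
    (hxy : ∀ ω, x ω ≤ y ω) :
    ∑ j, μ.real {ω | siDTS G h (x ω) (A (i + 1) ω) j ≠ siDES G h (y ω) (A (i + 1) ω) j} ≤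
      Fintype.card V * k ^ 2 * h ^ 2 + (1 + k * h) * ∑ j, μ.real {ω | x ω j ≠ y ω j} := by
  calc _ ≤ ∑ j, (μ.real {ω | TwoStepFires G h (A (i + 1) ω) j} + μ.real {ω | x ω j ≠ y ω j} +
        h * ∑ j' ∈ G.neighborFinset j, μ.real {ω | x ω j' ≠ y ω j'}) :=
      Finset.sum_le_sum fun j _ => hA.measureReal_siDTS_ne_siDES_le h0 hx hy hxy j
    _ = ∑ j, μ.real {ω | TwoStepFires G h (A (i + 1) ω) j} + ∑ j, μ.real {ω | x ω j ≠ y ω j} +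
        h * ∑ j, ∑ j' ∈ G.neighborFinset j, μ.real {ω | x ω j' ≠ y ω j'} := by
      rw [Finset.sum_add_distrib, Finset.sum_add_distrib, Finset.mul_sum]
    _ ≤ ∑ _j : V, (k : ℝ) ^ 2 * h ^ 2 + ∑ j, μ.real {ω | x ω j ≠ y ω j} +
        h * (k * ∑ j, μ.real {ω | x ω j ≠ y ω j}) := by
      gcongr with j
      · exact hA.measureReal_twoStepFires_le h0 hdeg i j
      · exact SimpleGraph.sum_sum_neighborFinset_le hdeg fun _ => measureReal_nonneg
    _ = _ := by rw [Finset.sum_const, Finset.card_univ, nsmul_eq_mul]; ring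

lemma sum_measureReal_orbit_ne_mul_le [Fintype V] [IsFiniteMeasure μ] [G.LocallyFinite]
    (hA : IsExpTimers A μ) (h0 : 0 ≤ h) {k : ℕ} (hdeg : ∀ j, G.degree j ≤ k) {x₀ : V → Bool}
    {X Y : ℕ → Ω → V → Bool} (hX0 : ∀ ω, X 0 ω = x₀) (hY0 : ∀ ω, Y 0 ω = x₀)
    (hX : ∀ i ω, X (i + 1) ω = siDTS G h (X i ω) (A (i + 1) ω))
    (hY : ∀ i ω, Y (i + 1) ω = siDES G h (Y i ω) (A (i + 1) ω)) (i : ℕ) :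
    (∑ j, μ.real {ω | X i ω j ≠ Y i ω j}) * (k * h) ≤
      Fintype.card V * k ^ 2 * h ^ 2 * (exp (k * h * i) - 1) := by
  have hmX := measurable_pastTimers_of_recursion measurable_siDTS hX0 hX
  have hmY := measurable_pastTimers_of_recursion measurable_siDES hY0 hY
  have hle : ∀ i ω, X i ω ≤ Y i ω := fun i ω =>
    siDTS_orbit_le_siDES_orbit (x := (X · ω)) (y := (Y · ω)) (a := (A · ω))
      ((hX0 ω).trans (hY0 ω).symm) (hX · ω) (hY · ω) i
  refine discrete_gronwall_exp_sub_one (d := fun i => ∑ j, μ.real {ω | X i ω j ≠ Y i ω j})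
    (by positivity) (by positivity) (by simp [hX0, hY0]) (fun i => ?_) i
  simpa only [hX, hY] using hA.sum_measureReal_siDTS_ne_siDES_le h0 hdeg (hmX i) (hmY i) (hle i)

end IsExpTimers

lemma integral_sum_abs_boolToR_sub [Fintype V] [MeasurableSpace Ω] {μ : Measure Ω}
    [IsFiniteMeasure μ] {x y : Ω → V → Bool} (hx : Measurable x) (hy : Measurable y) :
    ∫ ω, ∑ j, |boolToR (x ω j) - boolToR (y ω j)| ∂μ = ∑ j, μ.real {ω | x ω j ≠ y ω j} := by
  have hmeas : ∀ j, MeasurableSet {ω | x ω j ≠ y ω j} := fun j =>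
    (measurableSet_eq_fun ((measurable_pi_apply j).comp hx) ((measurable_pi_apply j).comp hy)).compl
  have hind : ∀ j, (fun ω => |boolToR (x ω j) - boolToR (y ω j)|) =
      {ω | x ω j ≠ y ω j}.indicator 1 := fun j => funext fun ω => by
    cases hxj : x ω j <;> cases hyj : y ω j <;> simp [boolToR, hxj, hyj]
  rw [integral_finsetSum _ fun j _ => hind j ▸ (integrable_const 1).indicator (hmeas j)]
  exact Finset.sum_congr rfl fun j _ => by rw [hind j, integral_indicator_one (hmeas j)]

end SIProcess

theorem si_global_error_bound {Ω : Type*} [MeasureSpace Ω]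
    [IsProbabilityMeasure (ℙ : Measure Ω)]
    {V : Type*} [Fintype V] (G : SimpleGraph V) (k : ℕ) (hk : 3 ≤ k)
    (hdeg : ∀ j : V, (G.neighborSet j).ncard ≤ k)
    (h : ℝ) (h0 : 0 < h)
    (A : ℕ → Ω → G.edgeSet → ℝ)
    (hAmeas : ∀ i : ℕ, ∀ e : G.edgeSet, Measurable fun ω => A (i + 1) ω e)
    (hAindep : iIndepFun
      (fun (p : ℕ × G.edgeSet) ω => A (p.1 + 1) ω p.2) ℙ)
    (hAdist : ∀ i : ℕ, ∀ e : G.edgeSet,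
      Measure.map (fun ω => A (i + 1) ω e) ℙ = expMeasure 1)
    (x₀ : V → Bool) (X Xt : ℕ → Ω → V → Bool)
    (hX0 : ∀ ω, X 0 ω = x₀) (hXt0 : ∀ ω, Xt 0 ω = x₀)
    (hX : ∀ i : ℕ, ∀ ω, X (i + 1) ω = siDTS G h (X i ω) (A (i + 1) ω))
    (hXt : ∀ i : ℕ, ∀ ω, Xt (i + 1) ω = siDES G h (Xt i ω) (A (i + 1) ω)) :
    ∀ i : ℕ,
      ∫ ω, ∑ j : V, |boolToR (X i ω j) - boolToR (Xt i ω j)| ∂ℙ ≤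
        ((Fintype.card V : ℝ) * (k : ℝ) ^ 2 * Real.exp ((k : ℝ) - 2)) *
          ((Real.exp ((k : ℝ) * ((i : ℝ) * h)) - 1) / (k : ℝ)) * h := by
  classical
  have hA : SIProcess.IsExpTimers A ℙ := ⟨hAmeas, hAindep, hAdist⟩
  have hdeg' : ∀ j, G.degree j ≤ k := fun j => by
    rw [← G.card_neighborFinset_eq_degree, SimpleGraph.neighborFinset_def,
      ← Set.ncard_eq_toFinset_card']
    exact hdeg j
  intro i
  have hd := hA.sum_measureReal_orbit_ne_mul_le h0.le hdeg' hX0 hXt0 hX hXt i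
  have hk0 : (0 : ℝ) < k := by positivity
  have hexp : 1 ≤ exp ((k : ℝ) - 2) :=
    one_le_exp (by linarith [show (3 : ℝ) ≤ k by exact_mod_cast hk])
  have hE : 0 ≤ exp ((k : ℝ) * (i * h)) - 1 := by
    linarith [one_le_exp (by positivity : (0 : ℝ) ≤ k * (i * h))]
  have hmX := (SIProcess.measurable_pastTimers_of_recursion SIProcess.measurable_siDTS hX0 hX
    i).mono (hA.timerSigma_le _) le_rfl
  have hmXt := (SIProcess.measurable_pastTimers_of_recursion SIProcess.measurable_siDES hXt0 hXt
    i).mono (hA.timerSigma_le _) le_rfl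
  calc _ = ∑ j, (ℙ : Measure Ω).real {ω | X i ω j ≠ Xt i ω j} :=
        SIProcess.integral_sum_abs_boolToR_sub hmX hmXt
    _ ≤ Fintype.card V * k * h * (exp ((k : ℝ) * (i * h)) - 1) :=
        le_of_mul_le_mul_right (hd.trans_eq (by ring_nf)) (mul_pos hk0 h0)
    _ ≤ Fintype.card V * k * h * (exp ((k : ℝ) * (i * h)) - 1) * exp ((k : ℝ) - 2) :=
        le_mul_of_one_le_right (by positivity) hexp
    _ = _ := by field_simp
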